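/- Let K be an abstract simplicial complex on Fin m, let Z_K^ℍ ⊆ ℍ^m be the associated quaternionic moment–angle complex with its coordinatewise Q^m-action, and let H be a subgroup of Q^m. Then H acts freely on Z_K^ℍ (for all h ∈ Z_K^ℍ and q ∈ H, q • h = h implies q = 1) if and only if H ∩ Q_σ = {1} for every face σ ∈ K. (This freeness criterion underlies the correspondence, stated in Section 2.3.2 of the paper, between quoric manifolds over P and subgroups of Q^m acting freely on Z_P^ℍ.) -/

import Mathlib

open scoped Quaternion

/-! Each face `σ` contributes the point with coordinates `0` on `σ` and `1` off `σ`, whose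
stabilizer is exactly `Q_σ`; conversely a point of the `σ`-cell has nonzero coordinates off `σ`,
so its stabilizer lies in `Q_σ`. Freeness of `H` thus means that `H` meets every `Q_σ` trivially. -/

/-- The unit quaternions `S³ = {q ∈ ℍ : ‖q‖ = 1}` act on `ℍ` by left multiplication. -/
noncomputable instance unitSphereMulActionQuaternion :
    MulAction (Metric.sphere (0 : ℍ[ℝ]) 1) ℍ[ℝ] where
  smul q h := (q : ℍ[ℝ]) * h
  one_smul h := by
    show ((1 : Metric.sphere (0 : ℍ[ℝ]) 1) : ℍ[ℝ]) * h = h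
    rw [Metric.unitSphere.coe_one, one_mul]
  mul_smul q q' h := by
    show ((q * q' : Metric.sphere (0 : ℍ[ℝ]) 1) : ℍ[ℝ]) * h
        = (q : ℍ[ℝ]) * ((q' : ℍ[ℝ]) * h)
    rw [Metric.unitSphere.coe_mul, mul_assoc]

/-- The coordinate subgroup `Q_σ = {q ∈ Q^m : qᵢ = 1 for all i ∉ σ}` of the quaternionic
torus `Q^m = (S³)^m`. -/
noncomputable def quaternionicCoordSubgroup (m : ℕ) (σ : Finset (Fin m)) :
    Subgroup (Fin m → Metric.sphere (0 : ℍ[ℝ]) 1) where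
  carrier := {q | ∀ i ∉ σ, q i = 1}
  one_mem' := fun _ _ => rfl
  mul_mem' := by
    intro a b ha hb i hi
    show a i * b i = 1
    rw [ha i hi, hb i hi, one_mul]
  inv_mem' := by
    intro a ha i hi
    show (a i)⁻¹ = 1
    rw [ha i hi, inv_one]

theorem unitSphere_smul_quaternion_eq_self_iff {q : Metric.sphere (0 : ℍ[ℝ]) 1} {x : ℍ[ℝ]}
    (hx : x ≠ 0) : q • x = x ↔ q = 1 := by
  change (q : ℍ[ℝ]) * x = x ↔ q = 1
  rw [mul_eq_right₀ hx, Subtype.ext_iff, Metric.unitSphere.coe_one]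

theorem mem_quaternionicCoordSubgroup_iff {m : ℕ} {σ : Finset (Fin m)}
    {q : Fin m → Metric.sphere (0 : ℍ[ℝ]) 1} :
    q ∈ quaternionicCoordSubgroup m σ ↔ ∀ i ∉ σ, q i = 1 :=
  Iff.rfl

theorem smul_eq_self_of_mem_quaternionicCoordSubgroup {m : ℕ} {σ : Finset (Fin m)}
    {q : Fin m → Metric.sphere (0 : ℍ[ℝ]) 1} {z : Fin m → ℍ[ℝ]}
    (hq : q ∈ quaternionicCoordSubgroup m σ) (hz : ∀ i ∈ σ, z i = 0) : q • z = z := by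
  funext i
  change (q i : ℍ[ℝ]) * z i = z i
  by_cases hi : i ∈ σ
  · rw [hz i hi, mul_zero]
  · rw [mem_quaternionicCoordSubgroup_iff.1 hq i hi, Metric.unitSphere.coe_one, one_mul]

theorem mem_quaternionicCoordSubgroup_of_smul_eq_self {m : ℕ} {σ : Finset (Fin m)}
    {q : Fin m → Metric.sphere (0 : ℍ[ℝ]) 1} {z : Fin m → ℍ[ℝ]}
    (hz : ∀ i ∉ σ, z i ≠ 0) (hqz : q • z = z) : q ∈ quaternionicCoordSubgroup m σ :=
  fun i hi => (unitSphere_smul_quaternion_eq_self_iff (hz i hi)).1 (congrFun hqz i)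

theorem free_action_on_quaternionic_moment_angle_complex_iff_general
    (m : ℕ) (K : Set (Finset (Fin m)))
    (H : Subgroup (Fin m → Metric.sphere (0 : ℍ[ℝ]) 1)) :
    (∀ h ∈ ⋃ σ ∈ K, {z : Fin m → ℍ[ℝ] | ∀ i, ‖z i‖ ≤ 1 ∧ (i ∉ σ → ‖z i‖ = 1)},
        ∀ q ∈ H, q • h = h → q = 1) ↔
      ∀ σ ∈ K, H ⊓ quaternionicCoordSubgroup m σ = ⊥ := by
  simp only [← disjoint_iff, Subgroup.disjoint_def, Set.mem_iUnion, Set.mem_ofPred_eq]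
  constructor
  · intro hfree σ hσ q hqH hqσ
    let z : Fin m → ℍ[ℝ] := fun i => if i ∈ σ then 0 else 1
    have hz_cell : ∀ i, ‖z i‖ ≤ 1 ∧ (i ∉ σ → ‖z i‖ = 1) := fun i => by
      by_cases hi : i ∈ σ <;> simp [z, hi]
    exact hfree z ⟨σ, hσ, hz_cell⟩ q hqH
      (smul_eq_self_of_mem_quaternionicCoordSubgroup hqσ fun i hi => if_pos hi)
  · rintro hdisj z ⟨σ, hσ, hz_cell⟩ q hqH hqz
    have hz_ne : ∀ i ∉ σ, z i ≠ 0 := fun i hi => norm_ne_zero_iff.1 <| by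
      rw [(hz_cell i).2 hi]; exact one_ne_zero
    exact hdisj σ hσ hqH (mem_quaternionicCoordSubgroup_of_smul_eq_self hz_ne hqz)

/-- freeness criterion underlying Section 2.3.2 of the paper. A subgroup
`H ≤ Q^m` acts freely on the quaternionic moment–angle complex `Z_K^ℍ` if and only if
`H ∩ Q_σ = {1}` for every face `σ ∈ K`. -/
theorem free_action_on_quaternionic_moment_angle_complex_iff
    (m : ℕ) (K : Set (Finset (Fin m)))
    (Kdown : ∀ σ ∈ K, ∀ τ ⊆ σ, τ ∈ K) (Kempty : ∅ ∈ K)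
    (H : Subgroup (Fin m → Metric.sphere (0 : ℍ[ℝ]) 1)) :
    (∀ h ∈ ⋃ σ ∈ K, {z : Fin m → ℍ[ℝ] | ∀ i, ‖z i‖ ≤ 1 ∧ (i ∉ σ → ‖z i‖ = 1)},
        ∀ q ∈ H, q • h = h → q = 1) ↔
      ∀ σ ∈ K, H ⊓ quaternionicCoordSubgroup m σ = ⊥ :=
  free_action_on_quaternionic_moment_angle_complex_iff_general m K H
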